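/- arXiv:2005.09051 — 3 statements merged into one kernel-verified Lean document; each statement's English description precedes it below -/
import Mathlib

section
/- Let q ≥ 2 be an integer, a, b ≥ 1 integers, and e = gcd(a,b). If both a/e and b/e are odd, then gcd(q^a + 1, q^b + 1) = q^e + 1; otherwise gcd(q^a + 1, q^b + 1) = gcd(2, q + 1) (that is, 2 if q is odd and 1 if q is even). -/
/-- For `q ≥ 2` and `a, b ≥ 1` with `e = gcd(a,b)`:
if both `a/e` and `b/e` are odd then `gcd(q^a+1, q^b+1) = q^e+1`,
otherwise `gcd(q^a+1, q^b+1) = gcd(2, q+1)`. -/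
theorem stmt_5 (q a b : ℕ) (hq : 2 ≤ q) (ha : 1 ≤ a) (hb : 1 ≤ b) :
    Nat.gcd (q ^ a + 1) (q ^ b + 1) =
      if Odd (a / Nat.gcd a b) ∧ Odd (b / Nat.gcd a b)
      then q ^ (Nat.gcd a b) + 1
      else Nat.gcd 2 (q + 1) := by
  set e := Nat.gcd a b with he
  set d := Nat.gcd (q ^ a + 1) (q ^ b + 1) with hd
  have hepos : 0 < e := Nat.gcd_pos_of_pos_left b ha
  have hae : e ∣ a := Nat.gcd_dvd_left a b
  have hbe : e ∣ b := Nat.gcd_dvd_right a b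
  have hamul : e * (a / e) = a := Nat.mul_div_cancel' hae
  have hbmul : e * (b / e) = b := Nat.mul_div_cancel' hbe
  have hda : d ∣ q ^ a + 1 := Nat.gcd_dvd_left _ _
  have hdb : d ∣ q ^ b + 1 := Nat.gcd_dvd_right _ _
  -- work in ZMod d
  have hQa : ((q : ZMod d)) ^ a = -1 := by
    have : ((q ^ a + 1 : ℕ) : ZMod d) = 0 := (ZMod.natCast_eq_zero_iff _ _).2 hda
    push_cast at this
    linear_combination this
  have hQb : ((q : ZMod d)) ^ b = -1 := by
    have : ((q ^ b + 1 : ℕ) : ZMod d) = 0 := (ZMod.natCast_eq_zero_iff _ _).2 hdb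
    push_cast at this
    linear_combination this
  set t : ZMod d := (q : ZMod d) ^ e with ht
  have hta : t ^ (a / e) = -1 := by
    rw [ht, ← pow_mul, hamul, hQa]
  have htb : t ^ (b / e) = -1 := by
    rw [ht, ← pow_mul, hbmul, hQb]
  have ht2 : t ^ 2 = 1 := by
    have h1 : t ^ (2 * (a / e)) = 1 := by
      rw [mul_comm, pow_mul, hta]; ring
    have h2 : t ^ (2 * (b / e)) = 1 := by
      rw [mul_comm, pow_mul, htb]; ring
    have o1 : orderOf t ∣ 2 * (a / e) := orderOf_dvd_of_pow_eq_one h1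
    have o2 : orderOf t ∣ 2 * (b / e) := orderOf_dvd_of_pow_eq_one h2
    have og : orderOf t ∣ 2 := by
      have := Nat.dvd_gcd o1 o2
      rwa [Nat.gcd_mul_left, Nat.coprime_div_gcd_div_gcd hepos, mul_one] at this
    exact orderOf_dvd_iff_pow_eq_one.1 og
  by_cases h : Odd (a / e) ∧ Odd (b / e)
  · rw [if_pos h]
    obtain ⟨k, hk⟩ := h.1
    have htneg : t = -1 := by
      have : t ^ (a / e) = t := by
        rw [hk, pow_add, pow_mul, ht2, one_pow, one_mul, pow_one]
      rw [← this, hta]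
    have hdvd1 : d ∣ q ^ e + 1 := by
      rw [← ZMod.natCast_eq_zero_iff]
      push_cast
      rw [← ht, htneg]; ring
    have hdvd2 : q ^ e + 1 ∣ d := by
      refine Nat.dvd_gcd ?_ ?_
      · have := h.1.nat_add_dvd_pow_add_pow (q ^ e) 1
        rwa [← pow_mul, hamul, one_pow] at this
      · have := h.2.nat_add_dvd_pow_add_pow (q ^ e) 1
        rwa [← pow_mul, hbmul, one_pow] at this
    exact Nat.dvd_antisymm hdvd1 hdvd2
  · rw [if_neg h]
    -- one of a/e, b/e is even
    have hd2 : d ∣ 2 := by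
      have key : (1 : ZMod d) = -1 := by
        rcases Nat.even_or_odd (a / e) with hev | hod
        · obtain ⟨k, hk⟩ := hev
          have h1 : t ^ (a / e) = 1 := by
            rw [hk, ← two_mul, pow_mul, ht2, one_pow]
          calc (1 : ZMod d) = t ^ (a / e) := h1.symm
            _ = -1 := hta
        · have hbev : Even (b / e) := by
            rcases Nat.even_or_odd (b / e) with h2 | h2
            · exact h2
            · exact absurd ⟨hod, h2⟩ h
          obtain ⟨k, hk⟩ := hbev
          have h1 : t ^ (b / e) = 1 := by
            rw [hk, ← two_mul, pow_mul, ht2, one_pow]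
          calc (1 : ZMod d) = t ^ (b / e) := h1.symm
            _ = -1 := htb
      have : ((2 : ℕ) : ZMod d) = 0 := by push_cast; linear_combination key
      exact (ZMod.natCast_eq_zero_iff _ _).1 this
    rcases Nat.even_or_odd q with hqe | hqo
    · -- q even : both sides are 1
      have hodd : Odd (q ^ a + 1) := Even.add_one (hqe.pow_of_ne_zero (by omega))
      have hdodd : Odd d := hodd.of_dvd_nat hda
      have hd1 : d = 1 := by
        rcases (Nat.dvd_prime Nat.prime_two).1 hd2 with h1 | h2
        · exact h1
        · rw [h2] at hdodd; exact absurd hdodd (by decide)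
      have hg : Nat.gcd 2 (q + 1) = 1 := hqe.add_one.coprime_two_left
      omega
    · -- q odd : both sides are 2
      have h2a : 2 ∣ q ^ a + 1 := (hqo.pow).add_one.two_dvd
      have h2b : 2 ∣ q ^ b + 1 := (hqo.pow).add_one.two_dvd
      have h2d : 2 ∣ d := Nat.dvd_gcd h2a h2b
      have hd1 : d = 2 := Nat.dvd_antisymm hd2 h2d
      have : Nat.gcd 2 (q + 1) = 2 := Nat.gcd_eq_left hqo.add_one.two_dvd
      omega
end

section
/- Let a_1 > a_2 > ... > a_t ≥ 1 be strictly decreasing positive integers and n = a_1 + ... + a_t. Then ∏_{i=1}^t (2^{a_i} + 1) < (12/5)·2^n. -/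
open Finset

lemma aux_prod_le (t : ℕ) (ht : 4 ≤ t) :
    ∏ j ∈ Finset.range t, (1 + (1/2 : ℚ) ^ (j+1)) ≤ 12/5 * (1 - (1/2)^t) := by
  induction t, ht using Nat.le_induction with
  | base =>
      simp [Finset.prod_range_succ]
      norm_num
  | succ t ht ih =>
      rw [Finset.prod_range_succ]
      have hx : (0:ℚ) < (1/2)^t := by positivity
      have hx1 : (1/2:ℚ)^t ≤ 1 := by
        apply pow_le_one₀ <;> norm_num
      have h2 : (0:ℚ) ≤ 1 + (1/2)^(t+1) := by positivity
      calc (∏ j ∈ Finset.range t, (1 + (1/2:ℚ)^(j+1))) * (1 + (1/2)^(t+1))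
          ≤ 12/5 * (1 - (1/2)^t) * (1 + (1/2)^(t+1)) := by
            apply mul_le_mul_of_nonneg_right ih h2
        _ ≤ 12/5 * (1 - (1/2)^(t+1)) := by
            rw [pow_succ]
            nlinarith [sq_nonneg ((1/2:ℚ)^t)]

lemma aux_prod_lt (t : ℕ) :
    ∏ j ∈ Finset.range t, (1 + (1/2 : ℚ) ^ (j+1)) < 12/5 := by
  rcases le_or_gt 4 t with h | h
  · have := aux_prod_le t h
    have hx : (0:ℚ) < (1/2)^t := by positivity
    linarith
  · interval_cases t <;> simp [Finset.prod_range_succ] <;> norm_num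

/-- If `a_1 > a_2 > ... > a_t ≥ 1` are strictly decreasing positive integers with sum `n`,
then `∏ (2^{a_i} + 1) < (12/5)·2^n`. -/
theorem stmt_8 (t : ℕ) (ht : 1 ≤ t) (a : Fin t → ℕ) (hanti : StrictAnti a)
    (hpos : ∀ i, 1 ≤ a i) (n : ℕ) (hn : n = ∑ i, a i) :
    (∏ i, ((2 : ℚ) ^ (a i) + 1)) < (12 / 5) * 2 ^ n := by
  -- key: a i ≥ t - i
  have key : ∀ i : Fin t, t - i.val ≤ a i := by
    intro i
    -- prove by induction on t - 1 - i.val : a i ≥ a j + (j - i) for i ≤ j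
    have step : ∀ k : ℕ, ∀ i : Fin t, i.val + k ≤ t - 1 → a i ≥ 1 + k := by
      intro k
      induction k with
      | zero => intro i _; simpa using hpos i
      | succ k ih =>
          intro i hik
          have hi1 : i.val + 1 < t := by omega
          have := ih ⟨i.val + 1, hi1⟩ (by simp; omega)
          have hlt : a i > a ⟨i.val + 1, hi1⟩ := hanti (by simp [Fin.lt_def])
          omega
    have hi : i.val ≤ t - 1 := by omega
    have := step (t - 1 - i.val) i (by omega)
    omega
  have hprod : (∏ i, ((2 : ℚ) ^ (a i) + 1)) ≤
      (2:ℚ)^n * ∏ i : Fin t, (1 + (1/2:ℚ)^(t - i.val)) := by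
    have : (2:ℚ)^n * ∏ i : Fin t, (1 + (1/2:ℚ)^(t - i.val))
        = ∏ i : Fin t, ((2:ℚ)^(a i) * (1 + (1/2:ℚ)^(t - i.val))) := by
      rw [Finset.prod_mul_distrib, hn, ← Finset.prod_pow_eq_pow_sum]
    rw [this]
    apply Finset.prod_le_prod
    · intro i _; positivity
    · intro i _
      have hk := key i
      have h2 : (1:ℚ) ≤ (2:ℚ)^(a i) * (1/2)^(t - i.val) := by
        rw [div_pow, one_pow, mul_one_div, le_div_iff₀ (by positivity), one_mul]
        exact pow_le_pow_right₀ (by norm_num) hk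
      nlinarith [pow_pos (by norm_num : (0:ℚ) < 2) (a i)]
  have hre : ∏ i : Fin t, (1 + (1/2:ℚ)^(t - i.val))
      = ∏ j ∈ Finset.range t, (1 + (1/2:ℚ)^(j+1)) := by
    rw [Fin.prod_univ_eq_prod_range (fun i => (1 + (1/2:ℚ)^(t - i)))]
    rw [← Finset.prod_range_reflect]
    apply Finset.prod_congr rfl
    intro j hj
    simp only [Finset.mem_range] at hj
    have : t - (t - 1 - j) = j + 1 := by omega
    rw [this]
  have h3 := aux_prod_lt t
  have h2n : (0:ℚ) < 2^n := by positivity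
  calc (∏ i, ((2 : ℚ) ^ (a i) + 1))
      ≤ (2:ℚ)^n * ∏ j ∈ Finset.range t, (1 + (1/2:ℚ)^(j+1)) := by rw [← hre]; exact hprod
    _ < (2:ℚ)^n * (12/5) := by exact mul_lt_mul_of_pos_left h3 h2n
    _ = 12/5 * 2^n := by ring
end

section
/- Let Q be a finite group and θ_1, ..., θ_t (t > 1) pairwise distinct nontrivial linear characters of Q that separate the points of Q in the sense that the common kernel of θ_1, ..., θ_t is trivial. Set σ = 1_Q + θ_1 + ... + θ_t. Suppose that θ_j(x)·conj(σ(x)) = σ(x) for all x ∈ Q and all 1 ≤ j ≤ t. Then |Q| = t + 1, σ(x) = 0 for all x ≠ 1, and σ is the regular character of Q (so Q is abelian and {1_Q, θ_1, ..., θ_t} is the full set of irreducible characters of Q). -/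
/-- Let `θ_1, ..., θ_t` (`t > 1`) be pairwise distinct nontrivial linear characters of a
finite group `Q` whose common kernel is trivial, and set `σ = 1 + θ_1 + ... + θ_t`.
If `θ_j(x)·conj(σ(x)) = σ(x)` for all `x ∈ Q` and all `j`, then `|Q| = t + 1`,
`σ(x) = 0` for all `x ≠ 1`, `σ` is the regular character of `Q`, and `Q` is abelian. -/
theorem stmt_16 {Q : Type*} [Group Q] [Fintype Q] [DecidableEq Q] (t : ℕ) (ht : 1 < t)
    (θ : Fin t → (Q →* ℂ)) (hinj : Function.Injective θ)
    (hnontriv : ∀ i, θ i ≠ 1)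
    (hsep : ∀ x : Q, (∀ i, θ i x = 1) → x = 1)
    (σ : Q → ℂ) (hσ : ∀ x, σ x = 1 + ∑ i, θ i x)
    (hrel : ∀ x : Q, ∀ i, θ i x * (starRingEnd ℂ) (σ x) = σ x) :
    Fintype.card Q = t + 1 ∧
    (∀ x : Q, x ≠ 1 → σ x = 0) ∧
    (∀ x : Q, σ x = if x = 1 then (Fintype.card Q : ℂ) else 0) ∧
    (∀ a b : Q, a * b = b * a) := by
  -- Step 1: σ x ≠ 0 → x = 1
  have hzero : ∀ x : Q, x ≠ 1 → σ x = 0 := by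
    intro x hx
    by_contra hs
    apply hx
    have hcs : (starRingEnd ℂ) (σ x) ≠ 0 := by
      simpa using hs
    have hc : ∀ i : Fin t, θ i x = σ x / (starRingEnd ℂ) (σ x) := by
      intro i
      field_simp
      exact hrel x i
    set c : ℂ := σ x / (starRingEnd ℂ) (σ x) with hcdef
    have hcc : c * (starRingEnd ℂ) c = 1 := by
      rw [hcdef, map_div₀, Complex.conj_conj]
      field_simp
    have hσx : σ x = 1 + (t : ℂ) * c := by
      rw [hσ]
      rw [Finset.sum_congr rfl (fun i _ => hc i)]
      simp [Finset.sum_const, mul_comm]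
    have i0 : Fin t := ⟨0, by omega⟩
    have hrel0 : c * (starRingEnd ℂ) (σ x) = σ x := by
      have h := hrel x i0
      rwa [hc i0] at h
    rw [hσx, map_add, map_one, map_mul] at hrel0
    have hct : (starRingEnd ℂ) (t : ℂ) = (t : ℂ) := by simp
    rw [hct] at hrel0
    have key : c + (t : ℂ) = 1 + (t : ℂ) * c := by
      have e : c * (1 + (t:ℂ) * (starRingEnd ℂ) c)
          = c + (t:ℂ) * (c * (starRingEnd ℂ) c) := by ring
      rw [e, hcc, mul_one] at hrel0
      exact hrel0
    have htne : ((t : ℂ) - 1) ≠ 0 := by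
      have : (t : ℂ) ≠ 1 := by
        exact_mod_cast (by omega : t ≠ 1)
      exact sub_ne_zero.mpr this
    have hc1 : c = 1 := by
      have hfac : ((t : ℂ) - 1) * (c - 1) = 0 := by
        linear_combination (-1 : ℂ) * key
      rcases mul_eq_zero.mp hfac with h | h
      · exact absurd h htne
      · exact sub_eq_zero.mp h
    exact hsep x (fun i => by rw [hc i, hc1])
  -- Step 2: sums of nontrivial characters vanish
  have hsum : ∀ i : Fin t, ∑ x : Q, θ i x = 0 := by
    intro i
    obtain ⟨g, hg⟩ : ∃ g : Q, θ i g ≠ 1 := by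
      by_contra h
      push_neg at h
      exact hnontriv i (MonoidHom.ext fun x => by simp [h x])
    have h1 : ∑ x : Q, θ i (g * x) = ∑ x : Q, θ i x :=
      Fintype.sum_equiv (Equiv.mulLeft g) _ _ (fun x => rfl)
    have h2 : θ i g * ∑ x : Q, θ i x = ∑ x : Q, θ i x := by
      rw [Finset.mul_sum, ← h1]
      exact Finset.sum_congr rfl (fun x _ => (map_mul (θ i) g x).symm)
    have h3 : (θ i g - 1) * ∑ x : Q, θ i x = 0 := by
      rw [sub_mul, one_mul, h2, sub_self]
    rcases mul_eq_zero.mp h3 with h | h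
    · exact absurd (sub_eq_zero.mp h) hg
    · exact h
  -- Step 3: cardinality
  have hσ1 : σ 1 = (t : ℂ) + 1 := by
    rw [hσ]
    simp [add_comm]
  have hsumσ : ∑ x : Q, σ x = (Fintype.card Q : ℂ) := by
    calc ∑ x : Q, σ x = ∑ x : Q, (1 + ∑ i, θ i x) := Finset.sum_congr rfl (fun x _ => hσ x)
    _ = (Fintype.card Q : ℂ) + ∑ x : Q, ∑ i, θ i x := by
        rw [Finset.sum_add_distrib]; simp
    _ = (Fintype.card Q : ℂ) + ∑ i, ∑ x : Q, θ i x := by rw [Finset.sum_comm]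
    _ = (Fintype.card Q : ℂ) := by simp [hsum]
  have hsingle : ∑ x : Q, σ x = σ 1 :=
    Finset.sum_eq_single 1 (fun b _ hb => hzero b hb) (by simp)
  have hcard : Fintype.card Q = t + 1 := by
    have : (Fintype.card Q : ℂ) = (t : ℂ) + 1 := by
      rw [← hsumσ, hsingle, hσ1]
    exact_mod_cast this
  refine ⟨hcard, hzero, ?_, ?_⟩
  · intro x
    by_cases hx : x = 1
    · subst hx
      rw [if_pos rfl, hσ1, hcard]
      push_cast
      ring
    · simp [hx, hzero x hx]
  · intro a b
    have key : ∀ i, θ i ((a * b) * (b * a)⁻¹) = 1 := by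
      intro i
      have h1 : θ i (a * b) = θ i (b * a) := by
        rw [map_mul, map_mul, mul_comm]
      have h2 : θ i (b * a) * θ i ((b * a)⁻¹) = 1 := by
        rw [← map_mul, mul_inv_cancel, map_one]
      rw [map_mul, h1, h2]
    exact mul_inv_eq_one.mp (hsep _ key)
end
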